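/- arXiv:0808.3870 — 7 statements merged into one kernel-verified Lean document; each statement's English description precedes it below -/
import Mathlib

section
/- Let m and k be positive integers and let P ⊆ ℝ^m × ℝ^k be the polytope of pairs (a, b) satisfying 0 ≤ a_j ≤ 1 for all j ∈ {1,…,m}, 0 ≤ b_l ≤ 1 for all l ∈ {1,…,k}, ∑_{j=1}^m a_j ≥ b_l for every l, and a_j ≤ ∑_{l=1}^k b_l for every j. Then P equals the convex hull of its points all of whose coordinates lie in {0,1}; that is, the linear relaxation of the integer-programming description of a single equivalence clause is integral. -/
/-!
Let `c = min (∑ a) (∑ b) 1`. Every coordinate of a point `p = (a, b)` of the polytope is at most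
`c`, so `p = 0` when `c = 0`. Otherwise `c⁻¹ • a` and `c⁻¹ • b` lie in the unit cube and have
coordinate sum at least `1`, and `p = c • (c⁻¹ • p) + (1 - c) • 0`; since pairs of 0/1 vectors
with at least one `1` each are 0/1 points of the polytope, it suffices to show that every
`x ∈ [0,1]ⁿ` with `∑ x ≥ 1` is a convex combination of such vectors.

For this we use McNaughton's wrap-around: lay intervals of lengths `x i` end to end on `ℝ` and
project them to the circle `ℝ/ℤ`. The arcs have lengths `x i ≤ 1` and cover the circle because
their total length is at least `1`, so for every `θ` the vector of indicators of the arcs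
containing `θ` is a 0/1 vector with a `1`, and its average over the circle is `x`.
-/

open MeasureTheory Set

noncomputable def circleArc (a b : ℝ) : Set UnitAddCircle :=
  Metric.closedBall (((a + b) / 2 : ℝ) : UnitAddCircle) ((b - a) / 2)

lemma measurableSet_circleArc (a b : ℝ) : MeasurableSet (circleArc a b) :=
  Metric.isClosed_closedBall.measurableSet

lemma volume_circleArc {a b : ℝ} (hba : b - a ≤ 1) :
    volume (circleArc a b) = ENNReal.ofReal (b - a) := by
  rw [circleArc, AddCircle.volume_closedBall, min_eq_right (by linarith)]
  ring_nf

lemma coe_mem_circleArc {a b t : ℝ} (ht : t ∈ Icc a b) : (t : UnitAddCircle) ∈ circleArc a b := by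
  rw [circleArc, Metric.mem_closedBall, dist_eq_norm, ← AddCircle.coe_sub]
  refine QuotientAddGroup.norm_mk_le_norm.trans ?_
  rw [Real.norm_eq_abs, abs_le]
  constructor <;> linarith [ht.1, ht.2]

lemma exists_mem_circleArc (y : ℕ → ℝ) {n : ℕ} (hy : 1 ≤ ∑ i ∈ Finset.range n, y i)
    (θ : UnitAddCircle) :
    ∃ j < n, θ ∈ circleArc (∑ i ∈ Finset.range j, y i) (∑ i ∈ Finset.range (j + 1), y i) := by
  obtain ⟨t, ht, rfl⟩ : ∃ t ∈ Ico (0 : ℝ) 1, (t : UnitAddCircle) = θ :=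
    ⟨_, by simpa using (AddCircle.equivIco 1 0 θ).2, AddCircle.coe_equivIco⟩
  have ht' := Ico_subset_biUnion_Ico n (fun j => ∑ i ∈ Finset.range j, y i)
    ⟨by simpa using ht.1, by simpa using ht.2.trans_le hy⟩
  simp only [mem_iUnion, Finset.mem_range] at ht'
  obtain ⟨j, hj, htj⟩ := ht'
  exact ⟨j, hj, coe_mem_circleArc (Ico_subset_Icc_self htj)⟩

lemma finite_setOf_forall_eq_zero_or_eq_one (ι : Type*) [Finite ι] :
    {z : ι → ℝ | ∀ i, z i = 0 ∨ z i = 1}.Finite :=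
  (Finite.pi fun _ => toFinite {0, 1}).subset fun _ hz i _ => hz i

def nonzeroZeroOneVectors (n : ℕ) : Set (Fin n → ℝ) :=
  {z | (∀ i, z i = 0 ∨ z i = 1) ∧ 1 ≤ ∑ i, z i}

theorem mem_convexHull_nonzeroZeroOneVectors {n : ℕ} {x : Fin n → ℝ} (h0 : ∀ i, 0 ≤ x i)
    (h1 : ∀ i, x i ≤ 1) (hs : 1 ≤ ∑ i, x i) :
    x ∈ convexHull ℝ (nonzeroZeroOneVectors n) := by
  set y : ℕ → ℝ := fun i => if h : i < n then x ⟨i, h⟩ else 0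
  have hy (i : Fin n) : y i = x i := by simp [y]
  set a : ℕ → ℝ := fun j => ∑ i ∈ Finset.range j, y i
  have ha (i : Fin n) : a (i + 1) - a i = x i := by simp [a, Finset.sum_range_succ, hy]
  let q : UnitAddCircle → Fin n → ℝ := fun θ i => (circleArc (a i) (a (i + 1))).indicator 1 θ
  have hq_int (i : Fin n) : Integrable (fun θ => q θ i) :=
    (integrable_const 1).indicator (measurableSet_circleArc _ _)
  have hq_mem (θ : UnitAddCircle) : q θ ∈ nonzeroZeroOneVectors n := by
    have hq01 (i : Fin n) : q θ i = 0 ∨ q θ i = 1 := by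
      by_cases h : θ ∈ circleArc (a i) (a (i + 1)) <;> simp [q, h]
    refine ⟨hq01, ?_⟩
    obtain ⟨j, hj, hθ⟩ := exists_mem_circleArc y (by
      rw [← Fin.sum_univ_eq_sum_range]
      exact hs.trans_eq (Finset.sum_congr rfl fun i _ => (hy i).symm)) θ
    calc 1 = q θ ⟨j, hj⟩ := by simp [q, a, hθ]
      _ ≤ ∑ i, q θ i := Finset.single_le_sum (fun i _ => by rcases hq01 i with h | h <;> simp [h])
          (Finset.mem_univ _)
  have hq_integral : ∫ θ, q θ = x := by
    ext i
    rw [eval_integral hq_int, integral_indicator_one (measurableSet_circleArc _ _),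
      measureReal_def, volume_circleArc (by rw [ha]; exact h1 i), ha,
      ENNReal.toReal_ofReal (h0 i)]
  have : IsProbabilityMeasure (volume : Measure UnitAddCircle) := ⟨by simp⟩
  rw [← hq_integral]
  exact (convex_convexHull ℝ _).integral_mem
    (((finite_setOf_forall_eq_zero_or_eq_one _).subset fun _ hz => hz.1).isClosed_convexHull ℝ)
    (ae_of_all _ fun θ => subset_convexHull ℝ _ (hq_mem θ)) (Integrable.of_eval hq_int)

theorem inv_smul_mem_convexHull_nonzeroZeroOneVectors {n : ℕ} {x : Fin n → ℝ} {c : ℝ}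
    (hc : 0 < c) (h0 : ∀ i, 0 ≤ x i) (hx : ∀ i, x i ≤ c) (hs : c ≤ ∑ i, x i) :
    c⁻¹ • x ∈ convexHull ℝ (nonzeroZeroOneVectors n) :=
  mem_convexHull_nonzeroZeroOneVectors (fun i => mul_nonneg (inv_nonneg.2 hc.le) (h0 i))
    (fun i => (inv_mul_le_one₀ hc).2 (hx i))
    (by simpa only [Pi.smul_apply, smul_eq_mul, ← Finset.mul_sum] using (one_le_inv_mul₀ hc).2 hs)

def clausePolytope (m k : ℕ) : Set ((Fin m → ℝ) × (Fin k → ℝ)) :=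
  {p | (∀ j, 0 ≤ p.1 j ∧ p.1 j ≤ 1) ∧ (∀ l, 0 ≤ p.2 l ∧ p.2 l ≤ 1) ∧
       (∀ l, p.2 l ≤ ∑ j, p.1 j) ∧ (∀ j, p.1 j ≤ ∑ l, p.2 l)}

def clauseZeroOnePoints (m k : ℕ) : Set ((Fin m → ℝ) × (Fin k → ℝ)) :=
  {p ∈ clausePolytope m k | (∀ j, p.1 j = 0 ∨ p.1 j = 1) ∧ (∀ l, p.2 l = 0 ∨ p.2 l = 1)}

lemma convex_clausePolytope (m k : ℕ) : Convex ℝ (clausePolytope m k) := by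
  rintro p ⟨ha, hb, hba, hab⟩ q ⟨ha', hb', hba', hab'⟩ s t hs ht hst
  simp only [clausePolytope, mem_ofPred_eq, Prod.fst_add, Prod.snd_add, Prod.smul_fst,
    Prod.smul_snd, Pi.add_apply, Pi.smul_apply, smul_eq_mul, Finset.sum_add_distrib,
    ← Finset.mul_sum]
  refine ⟨fun j => ⟨?_, ?_⟩, fun l => ⟨?_, ?_⟩, fun l => ?_, fun j => ?_⟩
  · nlinarith [ha j, ha' j]
  · nlinarith [ha j, ha' j]
  · nlinarith [hb l, hb' l]
  · nlinarith [hb l, hb' l]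
  · nlinarith [hba l, hba' l]
  · nlinarith [hab j, hab' j]

lemma zero_mem_clauseZeroOnePoints (m k : ℕ) : 0 ∈ clauseZeroOnePoints m k := by
  simp [clauseZeroOnePoints, clausePolytope]

lemma nonzeroZeroOneVectors_prod_subset (m k : ℕ) :
    nonzeroZeroOneVectors m ×ˢ nonzeroZeroOneVectors k ⊆ clauseZeroOnePoints m k := by
  rintro ⟨a, b⟩ ⟨⟨ha01, hsa⟩, ⟨hb01, hsb⟩⟩
  have mem_Icc {n : ℕ} (z : Fin n → ℝ) (hz : ∀ i, z i = 0 ∨ z i = 1) (i : Fin n) :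
      0 ≤ z i ∧ z i ≤ 1 := by
    rcases hz i with h | h <;> simp [h]
  exact ⟨⟨mem_Icc a ha01, mem_Icc b hb01, fun l => (mem_Icc b hb01 l).2.trans hsa,
    fun j => (mem_Icc a ha01 j).2.trans hsb⟩, ha01, hb01⟩

lemma clausePolytope_subset_convexHull (m k : ℕ) :
    clausePolytope m k ⊆ convexHull ℝ (clauseZeroOnePoints m k) := by
  intro p hp
  obtain ⟨ha, hb, hba, hab⟩ := id hp
  set c := min (min (∑ j, p.1 j) (∑ l, p.2 l)) 1
  have hca : c ≤ ∑ j, p.1 j := (min_le_left _ _).trans (min_le_left _ _)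
  have hcb : c ≤ ∑ l, p.2 l := (min_le_left _ _).trans (min_le_right _ _)
  have hac (j : Fin m) : p.1 j ≤ c :=
    le_min (le_min (Finset.single_le_sum (fun i _ => (ha i).1) (Finset.mem_univ j)) (hab j))
      (ha j).2
  have hbc (l : Fin k) : p.2 l ≤ c :=
    le_min (le_min (hba l) (Finset.single_le_sum (fun i _ => (hb i).1) (Finset.mem_univ l)))
      (hb l).2
  have hc0 : 0 ≤ c := le_min (le_min (Finset.sum_nonneg fun j _ => (ha j).1)
    (Finset.sum_nonneg fun l _ => (hb l).1)) zero_le_one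
  rcases hc0.eq_or_lt with hc | hc
  · exact subset_convexHull ℝ _ ⟨hp, fun j => .inl (le_antisymm (hc ▸ hac j) (ha j).1),
      fun l => .inl (le_antisymm (hc ▸ hbc l) (hb l).1)⟩
  have hscaled : c⁻¹ • p ∈ convexHull ℝ (clauseZeroOnePoints m k) := by
    refine convexHull_mono (nonzeroZeroOneVectors_prod_subset m k) ?_
    rw [convexHull_prod]
    exact ⟨inv_smul_mem_convexHull_nonzeroZeroOneVectors hc (fun j => (ha j).1) hac hca,
      inv_smul_mem_convexHull_nonzeroZeroOneVectors hc (fun l => (hb l).1) hbc hcb⟩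
  rw [← smul_inv_smul₀ hc.ne' p]
  exact (convex_convexHull ℝ _).smul_mem_of_zero_mem
    (subset_convexHull ℝ _ (zero_mem_clauseZeroOnePoints m k)) hscaled ⟨hc.le, min_le_right _ _⟩

theorem single_clause_polytope_integral_general (m k : ℕ) :
    let P : Set ((Fin m → ℝ) × (Fin k → ℝ)) :=
      {p | (∀ j, 0 ≤ p.1 j ∧ p.1 j ≤ 1) ∧ (∀ l, 0 ≤ p.2 l ∧ p.2 l ≤ 1) ∧
           (∀ l, p.2 l ≤ ∑ j, p.1 j) ∧ (∀ j, p.1 j ≤ ∑ l, p.2 l)}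
    P = convexHull ℝ
      {p ∈ P | (∀ j, p.1 j = 0 ∨ p.1 j = 1) ∧ (∀ l, p.2 l = 0 ∨ p.2 l = 1)} :=
  (clausePolytope_subset_convexHull m k).antisymm
    (convexHull_min (fun _ hp => hp.1) (convex_clausePolytope m k))

/-- Integrality of the LP relaxation of a single equivalence clause
`(⋁_{j=1}^m A_j) ↔ (⋁_{l=1}^k B_l)`: the polytope defined by
`0 ≤ a_j, b_l ≤ 1`, `b_l ≤ ∑_j a_j` and `a_j ≤ ∑_l b_l` equals the convex
hull of its 0/1 points. -/
theorem single_clause_polytope_integral (m k : ℕ) (hm : 0 < m) (hk : 0 < k) :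
    let P : Set ((Fin m → ℝ) × (Fin k → ℝ)) :=
      {p | (∀ j, 0 ≤ p.1 j ∧ p.1 j ≤ 1) ∧ (∀ l, 0 ≤ p.2 l ∧ p.2 l ≤ 1) ∧
           (∀ l, p.2 l ≤ ∑ j, p.1 j) ∧ (∀ j, p.1 j ≤ ∑ l, p.2 l)}
    P = convexHull ℝ
      {p ∈ P | (∀ j, p.1 j = 0 ∨ p.1 j = 1) ∧ (∀ l, p.2 l = 0 ∨ p.2 l = 1)} :=
  single_clause_polytope_integral_general m k
end

section
/- Let n be a positive integer, A, y : Fin n → Bool and B : Bool, and identify true with the integer 1 and false with 0. Then the relaxed equivalence formula ((∃ j, A j = true ∧ y j = true) ↔ (B = true ∧ ∃ j, y j = true)) holds if and only if the following integer inequalities all hold: B ≥ A_j − (1 − y_j) for every j ∈ {1,…,n}, and B ≤ ∑_{k∈S} A_k + (1 − y_j) + ∑_{k∉S} y_k for every nonempty subset S ⊆ {1,…,n} and every j ∈ S. Hence the 0/1 points satisfying these n + n·2^{n−1} inequalities are exactly the satisfying assignments of the relaxed clause. -/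
/-!
The lower inequality for `j` is the implication `A j ∧ y j → B`, so the lower family says that the
left side of the clause implies the right side. Each upper inequality has nonnegative right-hand
side and reads `B ∧ y j → (∃ k ∈ S, A k) ∨ (∃ k ∉ S, y k)`; taking `S` to be the support of `y`
shows that the upper family is the converse implication `B ∧ (∃ j, y j) → ∃ k, A k ∧ y k`.
-/

namespace RiffsatClause

open Finset

variable {ι : Type*}

lemma iff_and_iff_of_imp {p b q : Prop} (hpq : p → q) : (p ↔ b ∧ q) ↔ (p → b) ∧ (b → q → p) := by
  tauto

lemma toNat_sub_one_sub_le_toNat_iff (a y b : Bool) :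
    (a.toNat : ℤ) - (1 - y.toNat) ≤ b.toNat ↔ (a = true → y = true → b = true) := by
  cases a <;> cases y <;> cases b <;> decide

lemma toNat_le_iff_of_nonneg (b : Bool) {x : ℤ} (hx : 0 ≤ x) :
    (b.toNat : ℤ) ≤ x ↔ (b = true → 0 < x) := by
  cases b <;> simp [hx, Order.one_le_iff_pos]

lemma sum_toNat_nonneg (S : Finset ι) (f : ι → Bool) : 0 ≤ ∑ k ∈ S, ((f k).toNat : ℤ) :=
  sum_nonneg fun _ _ => Int.natCast_nonneg _

lemma sum_toNat_pos_iff (S : Finset ι) (f : ι → Bool) :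
    0 < ∑ k ∈ S, ((f k).toNat : ℤ) ↔ ∃ k ∈ S, f k = true := by
  simp [sum_pos_iff_of_nonneg fun _ _ => Int.natCast_nonneg _, Nat.pos_iff_ne_zero]

variable [Fintype ι] [DecidableEq ι]

lemma toNat_le_cut_iff (A y : ι → Bool) (B : Bool) (S : Finset ι) (j : ι) :
    (B.toNat : ℤ) ≤ (∑ k ∈ S, ((A k).toNat : ℤ)) + (1 - ((y j).toNat : ℤ))
        + ∑ k ∈ Sᶜ, ((y k).toNat : ℤ) ↔
      (B = true → y j = true → (∃ k ∈ S, A k = true) ∨ ∃ k ∈ Sᶜ, y k = true) := by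
  have hA := sum_toNat_nonneg S A
  have hy := sum_toNat_nonneg Sᶜ y
  have hyj : ((y j).toNat : ℤ) ≤ 1 := by cases y j <;> decide
  rw [toNat_le_iff_of_nonneg B (by omega), ← sum_toNat_pos_iff S A, ← sum_toNat_pos_iff Sᶜ y]
  refine imp_congr_right fun _ => ?_
  cases y j <;>
    simp only [Bool.toNat_false, Bool.toNat_true, Nat.cast_zero, Nat.cast_one, sub_zero, sub_self,
      add_zero, Bool.false_eq_true, IsEmpty.forall_iff, iff_true, forall_const] <;>
    omega

omit [DecidableEq ι] in
lemma forall_cut_iff (A y : ι → Bool) :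
    (∀ S : Finset ι, ∀ j ∈ S, y j = true →
        (∃ k ∈ S, A k = true) ∨ ∃ k ∉ S, y k = true) ↔
      ((∃ j, y j = true) → ∃ k, A k = true ∧ y k = true) := by
  classical
  constructor
  · rintro h ⟨j, hj⟩
    obtain ⟨k, hk, hAk⟩ | ⟨k, hk, hyk⟩ := h {k | y k = true} j (by simpa using hj) hj
    · exact ⟨k, hAk, by simpa using hk⟩
    · exact absurd hyk (by simpa using hk)
  · intro h S j _ hj
    obtain ⟨k, hAk, hyk⟩ := h ⟨j, hj⟩
    by_cases hk : k ∈ S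
    · exact .inl ⟨k, hk, hAk⟩
    · exact .inr ⟨k, hk, hyk⟩

theorem clause_iff_inequalities (A y : ι → Bool) (B : Bool) :
    ((∃ j, A j = true ∧ y j = true) ↔ (B = true ∧ ∃ j, y j = true)) ↔
      ((∀ j, ((A j).toNat : ℤ) - (1 - ((y j).toNat : ℤ)) ≤ (B.toNat : ℤ)) ∧
       (∀ S : Finset ι, S.Nonempty → ∀ j ∈ S,
         (B.toNat : ℤ) ≤ (∑ k ∈ S, ((A k).toNat : ℤ)) + (1 - ((y j).toNat : ℤ))
           + ∑ k ∈ Sᶜ, ((y k).toNat : ℤ))) := by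
  have lower : (∀ j, ((A j).toNat : ℤ) - (1 - ((y j).toNat : ℤ)) ≤ (B.toNat : ℤ)) ↔
      ((∃ j, A j = true ∧ y j = true) → B = true) := by
    simp only [toNat_sub_one_sub_le_toNat_iff]
    exact ⟨fun h ⟨j, hA, hy⟩ => h j hA hy, fun h j hA hy => h ⟨j, hA, hy⟩⟩
  have upper : (∀ S : Finset ι, S.Nonempty → ∀ j ∈ S,
      (B.toNat : ℤ) ≤ (∑ k ∈ S, ((A k).toNat : ℤ)) + (1 - ((y j).toNat : ℤ))
        + ∑ k ∈ Sᶜ, ((y k).toNat : ℤ)) ↔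
      (B = true → (∃ j, y j = true) → ∃ k, A k = true ∧ y k = true) := by
    simp only [toNat_le_cut_iff, mem_compl]
    rw [← forall_cut_iff]
    exact ⟨fun h hB S j hj hyj => h S ⟨j, hj⟩ j hj hB hyj,
      fun h S _ j hj hB hyj => h hB S j hj hyj⟩
  rw [lower, upper]
  exact iff_and_iff_of_imp fun ⟨j, _, hy⟩ => ⟨j, hy⟩

end RiffsatClause

theorem riffsat_clause_ip_iff_general (n : ℕ)
    (A y : Fin n → Bool) (B : Bool) :
    ((∃ j, A j = true ∧ y j = true) ↔ (B = true ∧ ∃ j, y j = true)) ↔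
      ((∀ j, ((A j).toNat : ℤ) - (1 - ((y j).toNat : ℤ)) ≤ (B.toNat : ℤ)) ∧
       (∀ S : Finset (Fin n), S.Nonempty → ∀ j ∈ S,
         (B.toNat : ℤ) ≤ (∑ k ∈ S, ((A k).toNat : ℤ)) + (1 - ((y j).toNat : ℤ))
           + ∑ k ∈ Sᶜ, ((y k).toNat : ℤ))) :=
  RiffsatClause.clause_iff_inequalities A y B

/-- The 0/1 points satisfying the `n + n·2^(n-1)` inequalities of the
RIFFSAT inequality description are exactly the satisfying assignments of the
relaxed equivalence clause `(⋁_j (A_j ∧ y_j)) ↔ (B ∧ ⋁_j y_j)`, identifying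
`true` with `1` and `false` with `0`. -/
theorem riffsat_clause_ip_iff (n : ℕ) (hn : 0 < n)
    (A y : Fin n → Bool) (B : Bool) :
    ((∃ j, A j = true ∧ y j = true) ↔ (B = true ∧ ∃ j, y j = true)) ↔
      ((∀ j, ((A j).toNat : ℤ) - (1 - ((y j).toNat : ℤ)) ≤ (B.toNat : ℤ)) ∧
       (∀ S : Finset (Fin n), S.Nonempty → ∀ j ∈ S,
         (B.toNat : ℤ) ≤ (∑ k ∈ S, ((A k).toNat : ℤ)) + (1 - ((y j).toNat : ℤ))
           + ∑ k ∈ Sᶜ, ((y k).toNat : ℤ))) :=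
  riffsat_clause_ip_iff_general n A y B
end

section
/- Let n ≥ 2 and let F ⊆ ℝ^{2n+1} be the set of 0/1 vectors (A, y, B) with A, y ∈ {0,1}^n, B ∈ {0,1} satisfying B ≥ A_j − (1 − y_j) for every j ∈ {1,…,n} and B ≤ ∑_{k∈S} A_k + (1 − y_j) + ∑_{k∉S} y_k for every nonempty S ⊆ {1,…,n} and every j ∈ S. Then for each fixed index j ∈ {1,…,n} there exist 2n+1 affinely independent points of F that satisfy the inequality B ≥ A_j − (1 − y_j) with equality, i.e. B = A_j − (1 − y_j). Consequently this inequality defines a facet of the convex hull of F. -/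
/-!
Write `e_k` for the `k`-th unit vector. The points `(0, e_j ⊔ e_k, 0)` and
`(e_k, e_j - e_j ⊓ e_k, 0)` for `k = 1, …, n` together with `(e_j, 𝟙, 1)` are feasible and
tight. They are affinely independent because the coordinates determine the weights of a
vanishing affine combination one group at a time: `B` sees only the last point, `A_i` then only
`(e_i, ⋯)`, `y_i` for `i ≠ j` only `(0, e_j ⊔ e_i, 0)`, and the total weight forces the remaining
weight to vanish.
-/

open Finset Function

theorem affineIndependent_of_sum_smul_eq_zero {k V ι : Type*} [Ring k] [AddCommGroup V]
    [Module k V] [Fintype ι] {p : ι → V}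
    (h : ∀ w : ι → k, ∑ i, w i = 0 → ∑ i, w i • p i = 0 → w = 0) : AffineIndependent k p :=
  (affineIndependent_iff_of_fintype k p).2 fun w hw hs =>
    congrFun (h w hw (by rwa [Finset.weightedVSub_eq_linear_combination _ hw] at hs))

def clauseFeasibleSet (n : ℕ) : Set ((Fin n → ℝ) × (Fin n → ℝ) × ℝ) :=
  {p | (∀ i, p.1 i = 0 ∨ p.1 i = 1) ∧ (∀ i, p.2.1 i = 0 ∨ p.2.1 i = 1) ∧
       (p.2.2 = 0 ∨ p.2.2 = 1) ∧
       (∀ i, p.1 i - (1 - p.2.1 i) ≤ p.2.2) ∧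
       (∀ S : Finset (Fin n), S.Nonempty → ∀ i ∈ S,
         p.2.2 ≤ (∑ k ∈ S, p.1 k) + (1 - p.2.1 i) + ∑ k ∈ Sᶜ, p.2.1 k)}

lemma nonneg_of_eq_zero_or_eq_one {x : ℝ} (h : x = 0 ∨ x = 1) : 0 ≤ x := by
  rcases h with rfl | rfl <;> norm_num

lemma le_one_of_eq_zero_or_eq_one {x : ℝ} (h : x = 0 ∨ x = 1) : x ≤ 1 := by
  rcases h with rfl | rfl <;> norm_num

namespace clauseFeasibleSet

variable {n : ℕ} {A y : Fin n → ℝ}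

theorem mk_zero_mem (hA : ∀ i, A i = 0 ∨ A i = 1) (hy : ∀ i, y i = 0 ∨ y i = 1)
    (hAy : ∀ i, A i + y i ≤ 1) : (A, y, 0) ∈ clauseFeasibleSet n := by
  refine ⟨hA, hy, .inl rfl, fun i => by linarith [hAy i], fun S _ i _ => ?_⟩
  have := sum_nonneg fun k (_ : k ∈ S) => nonneg_of_eq_zero_or_eq_one (hA k)
  have := sum_nonneg fun k (_ : k ∈ Sᶜ) => nonneg_of_eq_zero_or_eq_one (hy k)
  linarith [le_one_of_eq_zero_or_eq_one (hy i)]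

theorem mk_one_one_mem (hA : ∀ i, A i = 0 ∨ A i = 1) {j : Fin n} (hj : A j = 1) :
    (A, 1, 1) ∈ clauseFeasibleSet n := by
  refine ⟨hA, fun _ => .inr rfl, .inr rfl,
    fun i => by simpa using le_one_of_eq_zero_or_eq_one (hA i), fun S _ i _ => ?_⟩
  have hA₀ : ∀ k, 0 ≤ A k := fun k => nonneg_of_eq_zero_or_eq_one (hA k)
  simp only [Pi.one_apply, sub_self, add_zero]
  by_cases hjS : j ∈ S
  · have := single_le_sum (fun k _ => hA₀ k) hjS
    have := sum_nonneg fun k (_ : k ∈ Sᶜ) => (zero_le_one : (0:ℝ) ≤ 1)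
    linarith
  · have := single_le_sum (f := fun _ => (1:ℝ)) (fun _ _ => zero_le_one) (mem_compl.2 hjS)
    linarith [sum_nonneg fun k (_ : k ∈ S) => hA₀ k]

end clauseFeasibleSet

def facePoint {n : ℕ} (j : Fin n) : Option (Fin n ⊕ Fin n) → (Fin n → ℝ) × (Fin n → ℝ) × ℝ
  | none => (Pi.single j 1, 1, 1)
  | some (.inl k) => (0, update (Pi.single j 1) k 1, 0)
  | some (.inr k) => (Pi.single k 1, update (Pi.single j 1) k 0, 0)

namespace facePoint

variable {n : ℕ} (j : Fin n)

lemma single_zero_or_one (k i : Fin n) :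
    (Pi.single k 1 : Fin n → ℝ) i = 0 ∨ (Pi.single k 1 : Fin n → ℝ) i = 1 := by
  by_cases h : i = k <;> simp [h]

lemma update_single_zero_or_one (k i : Fin n) {c : ℝ} (hc : c = 0 ∨ c = 1) :
    update (Pi.single j 1 : Fin n → ℝ) k c i = 0 ∨
      update (Pi.single j 1 : Fin n → ℝ) k c i = 1 := by
  by_cases h : i = k
  · simpa [h]
  · simpa [h] using single_zero_or_one j i

theorem mem (x : Option (Fin n ⊕ Fin n)) : facePoint j x ∈ clauseFeasibleSet n := by
  rcases x with _ | k | k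
  · exact clauseFeasibleSet.mk_one_one_mem (single_zero_or_one j) (Pi.single_eq_same j 1)
  · refine clauseFeasibleSet.mk_zero_mem (fun _ => .inl rfl)
      (fun i => update_single_zero_or_one j k i (.inr rfl)) fun i => ?_
    simpa using le_one_of_eq_zero_or_eq_one (update_single_zero_or_one j k i (.inr rfl))
  · refine clauseFeasibleSet.mk_zero_mem (single_zero_or_one k)
      (fun i => update_single_zero_or_one j k i (.inl rfl)) fun i => ?_
    by_cases h : i = k
    · simp [h]
    · simpa [h] using le_one_of_eq_zero_or_eq_one (single_zero_or_one j i)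

theorem on_face (x : Option (Fin n ⊕ Fin n)) :
    (facePoint j x).2.2 = (facePoint j x).1 j - (1 - (facePoint j x).2.1 j) := by
  rcases x with _ | k | k
  · simp [facePoint]
  · by_cases h : j = k <;> simp [facePoint, h]
  · by_cases h : j = k <;> simp [facePoint, h]

theorem affineIndependent : AffineIndependent ℝ (facePoint j) := by
  refine affineIndependent_of_sum_smul_eq_zero fun w hw₀ hw => ?_
  have hB : w none = 0 := by
    have := congrArg (·.2.2) hw
    simp only [Prod.snd_sum] at this
    simpa [facePoint, Fintype.sum_option, Fintype.sum_sum_type] using this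
  have hA : ∀ i, w (some (.inr i)) = 0 := fun i => by
    have := congrFun (congrArg (·.1) hw) i
    simp only [Prod.fst_sum, Finset.sum_apply] at this
    simpa [facePoint, Fintype.sum_option, Fintype.sum_sum_type, hB, Pi.single_apply] using this
  have hy : ∀ i, i ≠ j → w (some (.inl i)) = 0 := fun i hi => by
    have := congrFun (congrArg (·.2.1) hw) i
    simp only [Prod.fst_sum, Prod.snd_sum, Finset.sum_apply] at this
    simpa [facePoint, Fintype.sum_option, Fintype.sum_sum_type, hB, hA, update_apply,
      Pi.single_apply, hi] using this
  have hyj : w (some (.inl j)) = 0 := by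
    simpa [Fintype.sum_option, Fintype.sum_sum_type, hB, hA,
      Finset.sum_eq_single j fun i _ => hy i] using hw₀
  funext x
  rcases x with _ | k | k
  · exact hB
  · by_cases h : k = j
    · exact h ▸ hyj
    · exact hy k h
  · exact hA k

end facePoint

theorem type_one_inequality_facet_general (n : ℕ) (j : Fin n) :
    let F : Set ((Fin n → ℝ) × (Fin n → ℝ) × ℝ) :=
      {p | (∀ i, p.1 i = 0 ∨ p.1 i = 1) ∧ (∀ i, p.2.1 i = 0 ∨ p.2.1 i = 1) ∧
           (p.2.2 = 0 ∨ p.2.2 = 1) ∧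
           (∀ i, p.1 i - (1 - p.2.1 i) ≤ p.2.2) ∧
           (∀ S : Finset (Fin n), S.Nonempty → ∀ i ∈ S,
             p.2.2 ≤ (∑ k ∈ S, p.1 k) + (1 - p.2.1 i) + ∑ k ∈ Sᶜ, p.2.1 k)}
    ∃ p : Fin (2 * n + 1) → (Fin n → ℝ) × (Fin n → ℝ) × ℝ,
      (∀ i, p i ∈ F) ∧ AffineIndependent ℝ p ∧
      ∀ i, (p i).2.2 = (p i).1 j - (1 - (p i).2.1 j) := by
  let e : Fin (2 * n + 1) ≃ Option (Fin n ⊕ Fin n) :=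
    (Fintype.equivFinOfCardEq <| by
      rw [Fintype.card_option, Fintype.card_sum, Fintype.card_fin]; ring).symm
  exact ⟨facePoint j ∘ e, fun i => facePoint.mem j (e i),
    (facePoint.affineIndependent j).comp_embedding e.toEmbedding,
    fun i => facePoint.on_face j (e i)⟩

/-- Facet property of the inequalities `B ≥ A_j − (1 − y_j)`: for each `j`,
the feasible 0/1 set `F` of a single relaxed equivalence clause contains
`2n+1` affinely independent points satisfying `B = A_j − (1 − y_j)`. -/
theorem type_one_inequality_facet (n : ℕ) (hn : 2 ≤ n) (j : Fin n) :
    let F : Set ((Fin n → ℝ) × (Fin n → ℝ) × ℝ) :=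
      {p | (∀ i, p.1 i = 0 ∨ p.1 i = 1) ∧ (∀ i, p.2.1 i = 0 ∨ p.2.1 i = 1) ∧
           (p.2.2 = 0 ∨ p.2.2 = 1) ∧
           (∀ i, p.1 i - (1 - p.2.1 i) ≤ p.2.2) ∧
           (∀ S : Finset (Fin n), S.Nonempty → ∀ i ∈ S,
             p.2.2 ≤ (∑ k ∈ S, p.1 k) + (1 - p.2.1 i) + ∑ k ∈ Sᶜ, p.2.1 k)}
    ∃ p : Fin (2 * n + 1) → (Fin n → ℝ) × (Fin n → ℝ) × ℝ,
      (∀ i, p i ∈ F) ∧ AffineIndependent ℝ p ∧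
      ∀ i, (p i).2.2 = (p i).1 j - (1 - (p i).2.1 j) :=
  type_one_inequality_facet_general n j
end

section
/- Let n ≥ 2 and let F ⊆ ℝ^{2n+1} be the set of 0/1 vectors (A, y, B) with A, y ∈ {0,1}^n, B ∈ {0,1} satisfying B ≥ A_j − (1 − y_j) for every j ∈ {1,…,n} and B ≤ ∑_{k∈S} A_k + (1 − y_j) + ∑_{k∉S} y_k for every nonempty S ⊆ {1,…,n} and every j ∈ S. Then for each fixed nonempty subset S ⊆ {1,…,n} and each fixed j ∈ S there exist 2n+1 affinely independent points of F that satisfy B = ∑_{k∈S} A_k + (1 − y_j) + ∑_{k∉S} y_k. Consequently each such inequality defines a facet of the convex hull of F. -/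
open Finset

namespace TypeTwoFacetAux

variable {n : ℕ}

/-- indicator vector of a single coordinate -/
def ind (k : Fin n) : Fin n → ℝ := fun i => if i = k then 1 else 0

/-- indicator vector of two coordinates -/
def ind2 (j k : Fin n) : Fin n → ℝ := fun i => if i = j ∨ i = k then 1 else 0

lemma ind_01 (k i : Fin n) : ind k i = 0 ∨ ind k i = 1 := by
  unfold ind; split <;> simp

lemma ind2_01 (j k i : Fin n) : ind2 j k i = 0 ∨ ind2 j k i = 1 := by
  unfold ind2; split <;> simp

lemma sum_ind (T : Finset (Fin n)) (k : Fin n) :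
    ∑ i ∈ T, ind k i = if k ∈ T then 1 else 0 := by
  simp [ind, Finset.sum_ite_eq']

lemma sum_ind2_zero {S : Finset (Fin n)} {j k : Fin n} (hj : j ∈ S) (hk : k ∈ S) :
    ∑ i ∈ Sᶜ, ind2 j k i = 0 := by
  refine Finset.sum_eq_zero fun i hi => ?_
  have hi' := Finset.mem_compl.mp hi
  have h1 : i ≠ j := fun h => hi' (h ▸ hj)
  have h2 : i ≠ k := fun h => hi' (h ▸ hk)
  simp [ind2, h1, h2]

lemma sum_ind2_one {S : Finset (Fin n)} {j k : Fin n} (hj : j ∈ S) (hk : k ∉ S) :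
    ∑ i ∈ Sᶜ, ind2 j k i = 1 := by
  have : ∀ i ∈ Sᶜ, ind2 j k i = ind k i := by
    intro i hi
    have hi' := Finset.mem_compl.mp hi
    have h1 : i ≠ j := fun h => hi' (h ▸ hj)
    simp [ind2, ind, h1]
  rw [Finset.sum_congr rfl this, sum_ind]
  simp [Finset.mem_compl, hk]

/-- The family of `2n+1` points. -/
def pts (S : Finset (Fin n)) (j : Fin n) :
    Option (Fin n ⊕ Fin n) → (Fin n → ℝ) × (Fin n → ℝ) × ℝ
  | none => (0, ind j, 0)
  | some (Sum.inl k) => if k ∈ S then (ind k, ind2 j k, 1) else (ind k, ind j, 0)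
  | some (Sum.inr k) =>
      if k = j then (0, 0, 1)
      else if k ∈ S then (0, ind2 j k, 0) else (ind k, ind2 j k, 1)

lemma feas_T {A y : Fin n → ℝ} {B : ℝ}
    (hA : ∀ i, A i = 0 ∨ A i = 1) (hy : ∀ i, y i = 0 ∨ y i = 1)
    (hB : B = 0 ∨ (B = 1 ∧ ((∃ m, A m = 1 ∧ y m = 1) ∨ ∀ i, y i = 0))) :
    ∀ T : Finset (Fin n), T.Nonempty → ∀ i ∈ T,
      B ≤ (∑ k ∈ T, A k) + (1 - y i) + ∑ k ∈ Tᶜ, y k := by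
  intro T _ i hi
  have hAnn : ∀ k ∈ T, (0:ℝ) ≤ A k := fun k _ => by rcases hA k with h | h <;> simp [h]
  have hynn : ∀ k ∈ Tᶜ, (0:ℝ) ≤ y k := fun k _ => by rcases hy k with h | h <;> simp [h]
  have h1 : (0:ℝ) ≤ ∑ k ∈ T, A k := Finset.sum_nonneg hAnn
  have h2 : (0:ℝ) ≤ ∑ k ∈ Tᶜ, y k := Finset.sum_nonneg hynn
  have h3 : (0:ℝ) ≤ 1 - y i := by rcases hy i with h | h <;> simp [h]
  rcases hB with h | ⟨hB1, h⟩
  · linarith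
  rcases h with ⟨m, hm1, hm2⟩ | hy0
  · by_cases hmT : m ∈ T
    · have := Finset.single_le_sum hAnn hmT
      rw [hm1] at this
      linarith
    · have hmT' : m ∈ Tᶜ := Finset.mem_compl.mpr hmT
      have := Finset.single_le_sum hynn hmT'
      rw [hm2] at this
      linarith
  · have h4 : y i = 0 := hy0 i
    linarith

lemma feas_one {A y : Fin n → ℝ} {B : ℝ}
    (hA : ∀ i, A i = 0 ∨ A i = 1) (hy : ∀ i, y i = 0 ∨ y i = 1)
    (hB : B = 0 ∨ B = 1) (h : B = 1 ∨ ∀ i, A i = 0 ∨ y i = 0) :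
    ∀ i, A i - (1 - y i) ≤ B := by
  intro i
  rcases h with h | h
  · rcases hA i with h1 | h1 <;> rcases hy i with h2 | h2 <;> rw [h1, h2, h] <;> norm_num
  · rcases hB with hB | hB <;>
      rcases h i with h1 | h1 <;> rcases hA i with h2 | h2 <;> rcases hy i with h3 | h3 <;>
      simp_all

/-- The linear functional family used for affine independence. -/
def fmap (S : Finset (Fin n)) (j : Fin n) :
    ((Fin n → ℝ) × (Fin n → ℝ) × ℝ) →ₗ[ℝ] ((Fin n → ℝ) × (Fin n → ℝ)) where
  toFun p :=
    (fun m => if m ∈ S then p.1 m else p.1 m - p.2.1 m,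
     fun m => if m = j then -p.2.1 j else if m ∈ S then p.2.1 m - p.1 m else p.2.1 m)
  map_add' p q := by
    refine Prod.ext ?_ ?_ <;> funext m <;>
      simp only [Prod.fst_add, Prod.snd_add, Pi.add_apply] <;> split_ifs <;> ring
  map_smul' c p := by
    refine Prod.ext ?_ ?_ <;> funext m <;>
      simp only [Prod.smul_fst, Prod.smul_snd, Pi.smul_apply, smul_eq_mul,
        RingHom.id_apply] <;> split_ifs <;> ring

lemma fmap_eval {S : Finset (Fin n)} {j : Fin n} (hj : j ∈ S) (s : Fin n ⊕ Fin n) :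
    fmap S j (pts S j (some s) - pts S j none) =
      ((Pi.basisFun ℝ (Fin n)).prod (Pi.basisFun ℝ (Fin n))) s := by
  classical
  cases s with
  | inl k =>
    by_cases hk : k ∈ S
    · refine Prod.ext ?_ ?_ <;> funext m <;>
        simp only [fmap, pts, hk, if_pos, LinearMap.coe_mk, AddHom.coe_mk, Prod.fst_sub,
          Prod.snd_sub, Pi.sub_apply, ind, ind2, Module.Basis.prod_apply, Pi.basisFun_apply,
          Sum.elim_inl, LinearMap.coe_inl, Function.comp_apply, Prod.fst_zero, Prod.snd_zero,
          Pi.zero_apply, Pi.single_apply]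
      · by_cases hms : m ∈ S
        · simp [ind, ind2, hms]
        · have h1 : m ≠ k := fun h => hms (h ▸ hk)
          have h2 : m ≠ j := fun h => hms (h ▸ hj)
          simp [ind, ind2, hms, h1, h2]
      · by_cases hmj : m = j
        · subst hmj; simp [ind, ind2, hj]
        · by_cases hms : m ∈ S
          · by_cases hmk : m = k
            · subst hmk; simp [ind, ind2, hms, hmj]
            · simp [ind, ind2, hms, hmj, hmk]
          · have h1 : m ≠ k := fun h => hms (h ▸ hk)
            simp [ind, ind2, hms, hmj, h1]
    · have hkj : k ≠ j := fun h => hk (h ▸ hj)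
      refine Prod.ext ?_ ?_ <;> funext m <;>
        simp only [fmap, pts, hk, if_neg, LinearMap.coe_mk, AddHom.coe_mk, Prod.fst_sub,
          Prod.snd_sub, Pi.sub_apply, ind, Module.Basis.prod_apply, Pi.basisFun_apply,
          Sum.elim_inl, LinearMap.coe_inl, Function.comp_apply, Prod.fst_zero, Prod.snd_zero,
          Pi.zero_apply, Pi.single_apply]
      · by_cases hms : m ∈ S
        · have h1 : m ≠ k := fun h => hk (h ▸ hms)
          simp [ind, ind2, hms, h1]
        · simp [ind, ind2, hms]
      · by_cases hmj : m = j
        · subst hmj; simp [ind, ind2, Ne.symm hkj]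
        · by_cases hms : m ∈ S
          · have h1 : m ≠ k := fun h => hk (h ▸ hms)
            simp [ind, ind2, hms, hmj, h1]
          · simp [ind, ind2, hms, hmj]
  | inr k =>
    by_cases hkj : k = j
    · subst hkj
      refine Prod.ext ?_ ?_ <;> funext m <;>
        simp only [fmap, pts, if_pos, LinearMap.coe_mk, AddHom.coe_mk, Prod.fst_sub,
          Prod.snd_sub, Pi.sub_apply, ind, Module.Basis.prod_apply, Pi.basisFun_apply,
          Sum.elim_inr, LinearMap.coe_inr, Function.comp_apply, Prod.fst_zero, Prod.snd_zero,
          Pi.zero_apply, Pi.single_apply]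
      · by_cases hms : m ∈ S
        · simp [ind, ind2, hms]
        · have h2 : m ≠ k := fun h => hms (h ▸ hj)
          simp [ind, ind2, hms, h2]
      · by_cases hmj : m = k
        · subst hmj; simp
        · by_cases hms : m ∈ S
          · simp [ind, ind2, hms, hmj]
          · simp [ind, ind2, hms, hmj]
    · by_cases hk : k ∈ S
      · refine Prod.ext ?_ ?_ <;> funext m <;>
          simp only [fmap, pts, hkj, hk, if_pos, if_neg, LinearMap.coe_mk, AddHom.coe_mk,
            Prod.fst_sub, Prod.snd_sub, Pi.sub_apply, ind, ind2, Module.Basis.prod_apply,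
            Pi.basisFun_apply, Sum.elim_inr, LinearMap.coe_inr, Function.comp_apply,
            Prod.fst_zero, Prod.snd_zero, Pi.zero_apply, Pi.single_apply]
        · by_cases hms : m ∈ S
          · simp [ind, ind2, hms]
          · have h1 : m ≠ k := fun h => hms (h ▸ hk)
            have h2 : m ≠ j := fun h => hms (h ▸ hj)
            simp [ind, ind2, hms, h1, h2]
        · by_cases hmj : m = j
          · subst hmj; simp [ind, ind2, hj, Ne.symm hkj]
          · by_cases hms : m ∈ S
            · by_cases hmk : m = k
              · subst hmk; simp [ind, ind2, hms, hmj]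
              · simp [ind, ind2, hms, hmj, hmk]
            · have h1 : m ≠ k := fun h => hms (h ▸ hk)
              simp [ind, ind2, hms, hmj, h1]
      · refine Prod.ext ?_ ?_ <;> funext m <;>
          simp only [fmap, pts, hkj, hk, if_neg, LinearMap.coe_mk, AddHom.coe_mk,
            Prod.fst_sub, Prod.snd_sub, Pi.sub_apply, ind, ind2, Module.Basis.prod_apply,
            Pi.basisFun_apply, Sum.elim_inr, LinearMap.coe_inr, Function.comp_apply,
            Prod.fst_zero, Prod.snd_zero, Pi.zero_apply, Pi.single_apply]
        · by_cases hms : m ∈ S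
          · have h1 : m ≠ k := fun h => hk (h ▸ hms)
            simp [ind, ind2, hms, h1]
          · by_cases hmk : m = k
            · subst hmk
              simp [ind, ind2, hms, hkj]
            · by_cases hmj : m = j
              · subst hmj; simp [ind, ind2, hms, hmk]
              · simp [ind, ind2, hms, hmk, hmj]
        · by_cases hmj : m = j
          · subst hmj; simp [ind, ind2, Ne.symm hkj, hj]
          · by_cases hms : m ∈ S
            · have h1 : m ≠ k := fun h => hk (h ▸ hms)
              simp [ind, ind2, hms, hmj, h1]
            · by_cases hmk : m = k
              · subst hmk; simp [ind, ind2, hms, hmj]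
              · simp [ind, ind2, hms, hmj, hmk]

end TypeTwoFacetAux

open TypeTwoFacetAux in
/-- Facet property of the inequalities
`B ≤ ∑_{k∈S} A_k + (1 − y_j) + ∑_{k∉S} y_k`: for each nonempty `S` and each
`j ∈ S`, the feasible 0/1 set `F` of a single relaxed equivalence clause
contains `2n+1` affinely independent points satisfying the inequality with
equality. -/
theorem type_two_inequality_facet (n : ℕ) (hn : 2 ≤ n)
    (S : Finset (Fin n)) (hS : S.Nonempty) (j : Fin n) (hj : j ∈ S) :
    let F : Set ((Fin n → ℝ) × (Fin n → ℝ) × ℝ) :=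
      {p | (∀ i, p.1 i = 0 ∨ p.1 i = 1) ∧ (∀ i, p.2.1 i = 0 ∨ p.2.1 i = 1) ∧
           (p.2.2 = 0 ∨ p.2.2 = 1) ∧
           (∀ i, p.1 i - (1 - p.2.1 i) ≤ p.2.2) ∧
           (∀ T : Finset (Fin n), T.Nonempty → ∀ i ∈ T,
             p.2.2 ≤ (∑ k ∈ T, p.1 k) + (1 - p.2.1 i) + ∑ k ∈ Tᶜ, p.2.1 k)}
    ∃ p : Fin (2 * n + 1) → (Fin n → ℝ) × (Fin n → ℝ) × ℝ,
      (∀ i, p i ∈ F) ∧ AffineIndependent ℝ p ∧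
      ∀ i, (p i).2.2 =
        (∑ k ∈ S, (p i).1 k) + (1 - (p i).2.1 j) + ∑ k ∈ Sᶜ, (p i).2.1 k := by
  classical
  intro F
  have e : Fin (2 * n + 1) ≃ Option (Fin n ⊕ Fin n) := by
    refine Fintype.equivOfCardEq ?_
    simp [Fintype.card_option]
    ring
  -- membership of each point in F
  have hmem : ∀ s, pts S j s ∈ F := by
    intro s
    have base : ∀ (A y : Fin n → ℝ) (B : ℝ),
        (∀ i, A i = 0 ∨ A i = 1) → (∀ i, y i = 0 ∨ y i = 1) → (B = 0 ∨ B = 1) →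
        (B = 1 ∨ ∀ i, A i = 0 ∨ y i = 0) →
        (B = 0 ∨ (B = 1 ∧ ((∃ m, A m = 1 ∧ y m = 1) ∨ ∀ i, y i = 0))) →
        ((A, y, B) ∈ F) := by
      intro A y B hA hy hB h1 h2
      exact ⟨hA, hy, hB, feas_one hA hy hB h1, feas_T hA hy h2⟩
    cases s with
    | none =>
      refine base 0 (ind j) 0 (fun i => Or.inl rfl) (ind_01 j) (Or.inl rfl)
        (Or.inr fun i => Or.inl rfl) (Or.inl rfl)
    | some s =>
      cases s with
      | inl k =>
        by_cases hk : k ∈ S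
        · have : pts S j (some (Sum.inl k)) = (ind k, ind2 j k, 1) := by simp [pts, hk]
          rw [this]
          refine base _ _ _ (ind_01 k) (ind2_01 j k) (Or.inr rfl) (Or.inl rfl)
            (Or.inr ⟨rfl, Or.inl ⟨k, ?_, ?_⟩⟩)
          · simp [ind]
          · simp [ind2]
        · have : pts S j (some (Sum.inl k)) = (ind k, ind j, 0) := by simp [pts, hk]
          rw [this]
          have hkj : k ≠ j := fun h => hk (h ▸ hj)
          refine base _ _ _ (ind_01 k) (ind_01 j) (Or.inl rfl) (Or.inr fun i => ?_)
            (Or.inl rfl)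
          by_cases hik : i = k
          · subst hik
            right; simp [ind, hkj]
          · left; simp [ind, hik]
      | inr k =>
        by_cases hkj : k = j
        · have : pts S j (some (Sum.inr k)) = (0, 0, 1) := by simp [pts, hkj]
          rw [this]
          exact base 0 0 1 (fun i => Or.inl rfl) (fun i => Or.inl rfl) (Or.inr rfl)
            (Or.inl rfl) (Or.inr ⟨rfl, Or.inr fun i => rfl⟩)
        · by_cases hk : k ∈ S
          · have : pts S j (some (Sum.inr k)) = (0, ind2 j k, 0) := by simp [pts, hkj, hk]
            rw [this]
            exact base _ _ _ (fun i => Or.inl rfl) (ind2_01 j k) (Or.inl rfl)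
              (Or.inr fun i => Or.inl rfl) (Or.inl rfl)
          · have : pts S j (some (Sum.inr k)) = (ind k, ind2 j k, 1) := by
              simp [pts, hkj, hk]
            rw [this]
            refine base _ _ _ (ind_01 k) (ind2_01 j k) (Or.inr rfl) (Or.inl rfl)
              (Or.inr ⟨rfl, Or.inl ⟨k, ?_, ?_⟩⟩)
            · simp [ind]
            · simp [ind2]
  -- equality of each point
  have heq : ∀ s, (pts S j s).2.2 =
      (∑ k ∈ S, (pts S j s).1 k) + (1 - (pts S j s).2.1 j) + ∑ k ∈ Sᶜ, (pts S j s).2.1 k := by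
    intro s
    cases s with
    | none =>
      have h1 : ∑ k ∈ S, (0:ℝ) = 0 := by simp
      have h2 : ind j j = 1 := by simp [ind]
      have h3 : ∑ k ∈ Sᶜ, ind j k = 0 := by
        rw [sum_ind]; simp [Finset.mem_compl, hj]
      simp [pts, h2, h3]
    | some s =>
      cases s with
      | inl k =>
        by_cases hk : k ∈ S
        · have : pts S j (some (Sum.inl k)) = (ind k, ind2 j k, 1) := by simp [pts, hk]
          rw [this]
          have h1 : ∑ m ∈ S, ind k m = 1 := by rw [sum_ind]; simp [hk]
          have h2 : ind2 j k j = 1 := by simp [ind2]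
          have h3 := sum_ind2_zero hj hk
          simp only [h1, h2, h3]
          norm_num
        · have : pts S j (some (Sum.inl k)) = (ind k, ind j, 0) := by simp [pts, hk]
          rw [this]
          have h1 : ∑ m ∈ S, ind k m = 0 := by rw [sum_ind]; simp [hk]
          have h2 : ind j j = 1 := by simp [ind]
          have h3 : ∑ k ∈ Sᶜ, ind j k = 0 := by
            rw [sum_ind]; simp [Finset.mem_compl, hj]
          simp only [h1, h2, h3]
          norm_num
      | inr k =>
        by_cases hkj : k = j
        · have : pts S j (some (Sum.inr k)) = (0, 0, 1) := by simp [pts, hkj]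
          rw [this]
          simp
        · by_cases hk : k ∈ S
          · have : pts S j (some (Sum.inr k)) = (0, ind2 j k, 0) := by simp [pts, hkj, hk]
            rw [this]
            have h2 : ind2 j k j = 1 := by simp [ind2]
            have h3 := sum_ind2_zero hj hk
            simp only [h2, h3]
            norm_num
          · have : pts S j (some (Sum.inr k)) = (ind k, ind2 j k, 1) := by
              simp [pts, hkj, hk]
            rw [this]
            have h1 : ∑ m ∈ S, ind k m = 0 := by rw [sum_ind]; simp [hk]
            have h2 : ind2 j k j = 1 := by simp [ind2]
            have h3 := sum_ind2_one hj hk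
            simp only [h1, h2, h3]
            norm_num
  -- affine independence
  have haff : AffineIndependent ℝ (pts S j) := by
    rw [affineIndependent_iff_linearIndependent_vsub ℝ _ none]
    let eo : (Fin n ⊕ Fin n) ≃ {x : Option (Fin n ⊕ Fin n) // x ≠ none} :=
      { toFun := fun s => ⟨some s, by simp⟩
        invFun := fun x => x.1.get (Option.ne_none_iff_isSome.mp x.2)
        left_inv := fun s => rfl
        right_inv := fun x => Subtype.ext (Option.some_get _) }
    rw [← linearIndependent_equiv eo]
    have key : (fun i : {x : Option (Fin n ⊕ Fin n) // x ≠ none} =>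
        pts S j ↑i -ᵥ pts S j none) ∘ ⇑eo =
        fun s => pts S j (some s) - pts S j none := by
      funext s; rfl
    rw [key]
    refine LinearIndependent.of_comp (fmap S j) ?_
    have : ⇑(fmap S j) ∘ (fun s => pts S j (some s) - pts S j none) =
        ⇑((Pi.basisFun ℝ (Fin n)).prod (Pi.basisFun ℝ (Fin n))) := by
      funext s
      exact fmap_eval hj s
    rw [this]
    exact Module.Basis.linearIndependent _
  refine ⟨pts S j ∘ ⇑e, fun i => hmem (e i), (affineIndependent_equiv e).mpr haff,
    fun i => heq (e i)⟩
end

section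
/- Let n be a positive integer. Let F ⊆ {0,1}^{2n+1} be the set of (A, y, B) with A, y ∈ {0,1}^n, B ∈ {0,1} satisfying B ≥ A_j − (1 − y_j) for every j and B ≤ ∑_{k∈S} A_k + (1 − y_j) + ∑_{k∉S} y_k for every nonempty S ⊆ {1,…,n} and j ∈ S, and let F_mon ⊆ {0,1}^{2n+1} be the set of (A, y, B) satisfying B ≥ A_j − (1 − y_j) and B ≤ ∑_{k=1}^n A_k + (1 − y_j) for every j. Then for every fixed A ∈ {0,1}^n and B ∈ {0,1}, the maximum of ∑_{j=1}^n y_j over {y ∈ {0,1}^n : (A, y, B) ∈ F} equals the maximum of ∑_{j=1}^n y_j over {y ∈ {0,1}^n : (A, y, B) ∈ F_mon} (both sets are nonempty since y = 0 is always feasible). Hence the monotonized system has the same maximal y-solutions as the original relaxed clause. -/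
/-!
The monotonized constraints are separable: each `y j` is bounded on its own by
`u j = min (min 1 (B + 1 - A j)) (∑ A + 1 - B)`, so `∑ u` bounds the sums over `F_mon`.
The vector `u` itself is 0/1 and satisfies the original clause (for `B = 1` one has `A ≤ u`
pointwise, which absorbs the sums over `Sᶜ`), and the original clause implies the monotonized
one by taking `S = univ`. Hence `∑ u` is the maximum of both sets.
-/

open Finset

section

variable {ι : Type*} [Fintype ι]

def MonotonizedFeasible (A : ι → ℤ) (B : ℤ) (y : ι → ℤ) : Prop :=
  (∀ j, A j - (1 - y j) ≤ B) ∧ ∀ j, B ≤ (∑ k, A k) + (1 - y j)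

def monotonizedBound (A : ι → ℤ) (B : ℤ) (j : ι) : ℤ :=
  min (min 1 (B + 1 - A j)) (∑ k, A k + 1 - B)

variable {A : ι → ℤ} {B : ℤ}

theorem le_monotonizedBound {y : ι → ℤ} (hy : MonotonizedFeasible A B y) {j : ι}
    (hyj : y j = 0 ∨ y j = 1) : y j ≤ monotonizedBound A B j := by
  have := hy.1 j
  have := hy.2 j
  refine le_min (le_min ?_ ?_) ?_ <;> omega

theorem monotonizedBound_eq_zero_or_one (hA : ∀ j, A j = 0 ∨ A j = 1) (hB : B = 0 ∨ B = 1)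
    (j : ι) : monotonizedBound A B j = 0 ∨ monotonizedBound A B j = 1 := by
  have hsum : 0 ≤ ∑ k, A k := sum_nonneg fun k _ => by rcases hA k with h | h <;> omega
  have := hA j
  unfold monotonizedBound
  omega

theorem le_monotonizedBound_one (hA : ∀ j, A j = 0 ∨ A j = 1) (k : ι) :
    A k ≤ monotonizedBound A 1 k := by
  have hAk : A k ≤ ∑ i, A i :=
    single_le_sum (fun i _ => by rcases hA i with h | h <;> omega) (mem_univ k)
  have := hA k
  refine le_min (le_min ?_ ?_) ?_ <;> omega

variable [DecidableEq ι]

def ClauseFeasible (A : ι → ℤ) (B : ℤ) (y : ι → ℤ) : Prop :=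
  (∀ j, A j - (1 - y j) ≤ B) ∧
    ∀ S : Finset ι, S.Nonempty → ∀ j ∈ S, B ≤ (∑ k ∈ S, A k) + (1 - y j) + ∑ k ∈ Sᶜ, y k

theorem ClauseFeasible.monotonizedFeasible {y : ι → ℤ}
    (h : ClauseFeasible A B y) : MonotonizedFeasible A B y := by
  refine ⟨h.1, fun j => ?_⟩
  simpa using h.2 univ ⟨j, mem_univ j⟩ j (mem_univ j)

theorem clauseFeasible_monotonizedBound (hA : ∀ j, A j = 0 ∨ A j = 1) (hB : B = 0 ∨ B = 1) :
    ClauseFeasible A B (monotonizedBound A B) := by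
  have hu := monotonizedBound_eq_zero_or_one hA hB
  refine ⟨fun j => ?_, fun S _ j _ => ?_⟩
  · have : monotonizedBound A B j ≤ B + 1 - A j := (min_le_left _ _).trans (min_le_right _ _)
    omega
  have hSA : 0 ≤ ∑ k ∈ S, A k := sum_nonneg fun k _ => by rcases hA k with h | h <;> omega
  rcases hB with rfl | rfl
  · have : 0 ≤ ∑ k ∈ Sᶜ, monotonizedBound A 0 k :=
      sum_nonneg fun k _ => by rcases hu k with h | h <;> omega
    have := hu j
    omega
  · have huj : monotonizedBound A 1 j ≤ ∑ k, A k := by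
      have : monotonizedBound A 1 j ≤ ∑ k, A k + 1 - 1 := min_le_right _ _
      omega
    have hSc : ∑ k ∈ Sᶜ, A k ≤ ∑ k ∈ Sᶜ, monotonizedBound A 1 k :=
      sum_le_sum fun k _ => le_monotonizedBound_one hA k
    have := sum_add_sum_compl S A
    omega

end

theorem monotonized_same_maximal_y_general (n : ℕ)
    (A : Fin n → ℤ) (B : ℤ)
    (hA : ∀ j, A j = 0 ∨ A j = 1) (hB : B = 0 ∨ B = 1) :
    ∃ M : ℤ,
      IsGreatest {s : ℤ | ∃ y : Fin n → ℤ, (∀ j, y j = 0 ∨ y j = 1) ∧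
          (∀ j, A j - (1 - y j) ≤ B) ∧
          (∀ S : Finset (Fin n), S.Nonempty → ∀ j ∈ S,
            B ≤ (∑ k ∈ S, A k) + (1 - y j) + ∑ k ∈ Sᶜ, y k) ∧
          s = ∑ j, y j} M ∧
      IsGreatest {s : ℤ | ∃ y : Fin n → ℤ, (∀ j, y j = 0 ∨ y j = 1) ∧
          (∀ j, A j - (1 - y j) ≤ B) ∧
          (∀ j, B ≤ (∑ k, A k) + (1 - y j)) ∧
          s = ∑ j, y j} M := by
  set u := monotonizedBound A B
  have hu01 := monotonizedBound_eq_zero_or_one hA hB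
  have hu : ClauseFeasible A B u := clauseFeasible_monotonizedBound hA hB
  have hmax {y : Fin n → ℤ} (hy01 : ∀ j, y j = 0 ∨ y j = 1) (hy : MonotonizedFeasible A B y) :
      ∑ j, y j ≤ ∑ j, u j :=
    sum_le_sum fun j _ => le_monotonizedBound hy (hy01 j)
  refine ⟨∑ j, u j, ⟨⟨u, hu01, hu.1, hu.2, rfl⟩, ?_⟩,
    ⟨⟨u, hu01, hu.monotonizedFeasible.1, hu.monotonizedFeasible.2, rfl⟩, ?_⟩⟩
  · rintro _ ⟨y, hy01, hlow, hupp, rfl⟩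
    exact hmax hy01 (ClauseFeasible.monotonizedFeasible ⟨hlow, hupp⟩)
  · rintro _ ⟨y, hy01, hlow, hupp, rfl⟩
    exact hmax hy01 ⟨hlow, hupp⟩

/-- For every fixed 0/1 vector `A` and 0/1 value `B`, the maximum of
`∑_j y_j` over the 0/1 vectors `y` feasible for the original relaxed
equivalence clause equals the maximum over those feasible for its
monotonized version; both maxima exist. -/
theorem monotonized_same_maximal_y (n : ℕ) (hn : 0 < n)
    (A : Fin n → ℤ) (B : ℤ)
    (hA : ∀ j, A j = 0 ∨ A j = 1) (hB : B = 0 ∨ B = 1) :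
    ∃ M : ℤ,
      IsGreatest {s : ℤ | ∃ y : Fin n → ℤ, (∀ j, y j = 0 ∨ y j = 1) ∧
          (∀ j, A j - (1 - y j) ≤ B) ∧
          (∀ S : Finset (Fin n), S.Nonempty → ∀ j ∈ S,
            B ≤ (∑ k ∈ S, A k) + (1 - y j) + ∑ k ∈ Sᶜ, y k) ∧
          s = ∑ j, y j} M ∧
      IsGreatest {s : ℤ | ∃ y : Fin n → ℤ, (∀ j, y j = 0 ∨ y j = 1) ∧
          (∀ j, A j - (1 - y j) ≤ B) ∧
          (∀ j, B ≤ (∑ k, A k) + (1 - y j)) ∧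
          s = ∑ j, y j} M :=
  monotonized_same_maximal_y_general n A B hA hB
end

section
/- Let n be a positive integer and let P_mon ⊆ ℝ^{2n+1} be the set of (A, y, B) with A, y ∈ [0,1]^n and B ∈ [0,1] satisfying B ≥ A_j − (1 − y_j) and B ≤ ∑_{k=1}^n A_k + (1 − y_j) for every j ∈ {1,…,n}. Then P_mon equals the convex hull of F_mon, where F_mon = P_mon ∩ {0,1}^{2n+1} is the set of its 0/1 points; that is, the linear relaxation of the monotonized single-clause system is integral. -/
/-!
Randomized threshold rounding. Given `(A, y, B) ∈ P_mon`, draw `t` uniformly from `[0, 1)`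
and round to `B̂ = [t < B]`, `Â_j = [t ∈ I_j]`, `ŷ_j = 1 - [t ∈ Z_j]`, where `I_j` is an
interval of length `A_j` and `Z_j` one of length `1 - y_j`. Laid end to end, each pushed left
so as to end before `max A_j B`, the `I_j` cover `[0, S)` with `S = min B (∑ A)`. The clause
inequalities say exactly that `max A_j B ≤ S + (1 - y_j)`, so `Z_j` can be chosen to cover
`[S, max A_j B)`. Then every rounded point is a 0/1 point of `P_mon`, and its expectation is
`(A, y, B)`.
-/

open MeasureTheory Set

namespace Fin

variable {α : Type*} [AddMonoid α] {n : ℕ}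

theorem partialSum_last {β : Type*} [AddCommMonoid β] (f : Fin n → β) :
    partialSum f (last n) = ∑ i, f i := by
  rw [partialSum, val_last, List.take_of_length_le (by simp), List.sum_ofFn]

theorem partialSum_nonneg [Preorder α] [AddLeftMono α] {f : Fin n → α} (hf : 0 ≤ f)
    (k : Fin (n + 1)) :
    0 ≤ partialSum f k := by
  induction k using Fin.induction with
  | zero => simp
  | succ j ih => rw [partialSum_succ]; exact add_nonneg ih (hf j)

theorem exists_mem_Ico_partialSum [LinearOrder α] (f : Fin n → α) {t : α} (ht : 0 ≤ t)
    {k : Fin (n + 1)} (hk : t < partialSum f k) :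
    ∃ j : Fin n, t ∈ Ico (partialSum f j.castSucc) (partialSum f j.succ) := by
  induction k using Fin.induction with
  | zero => rw [partialSum_zero] at hk; exact absurd ht hk.not_ge
  | succ j ih =>
    by_cases hj : t < partialSum f j.castSucc
    · exact ih hj
    · exact ⟨j, not_lt.1 hj, hk⟩

end Fin

namespace Set

variable {α : Type*} {s u v : Set α}

theorem indicator_one_le_add_of_subset_union (h : s ⊆ u ∪ v) (x : α) :
    s.indicator (1 : α → ℝ) x ≤ u.indicator 1 x + v.indicator 1 x := by
  by_cases hs : x ∈ s
  · rcases h hs with hu | hv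
    · simp [hs, hu, indicator_nonneg]
    · simp [hs, hv, indicator_nonneg]
  · simp [hs, indicator_nonneg, add_nonneg]

theorem indicator_one_iUnion_le_sum {ι : Type*} [Fintype ι] (u : ι → Set α) (x : α) :
    (⋃ i, u i).indicator (1 : α → ℝ) x ≤ ∑ i, (u i).indicator 1 x := by
  by_cases hx : x ∈ ⋃ i, u i
  · obtain ⟨i, hi⟩ := mem_iUnion.1 hx
    rw [indicator_of_mem hx]
    calc (1 : α → ℝ) x = (u i).indicator 1 x := (indicator_of_mem hi _).symm
      _ ≤ _ := Finset.single_le_sum (fun j _ => indicator_nonneg (fun _ _ => zero_le_one) x)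
          (Finset.mem_univ i)
  · rw [indicator_of_notMem hx]
    exact Finset.sum_nonneg fun i _ => indicator_nonneg (fun _ _ => zero_le_one) x

end Set

instance isProbabilityMeasure_volume_restrict_Ico_zero_one :
    IsProbabilityMeasure (volume.restrict (Ico (0 : ℝ) 1)) :=
  ⟨by simp⟩

theorem setIntegral_indicator_one_of_subset {X : Type*} [MeasurableSpace X] {μ : Measure X}
    {s t : Set X} (hs : MeasurableSet s) (hst : s ⊆ t) :
    ∫ x in t, s.indicator 1 x ∂μ = μ.real s := by
  rw [integral_indicator_one hs, measureReal_restrict_apply hs, inter_eq_left.2 hst]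

namespace MonotonizedClause

open Fin (partialSum)

def polytope (n : ℕ) : Set ((Fin n → ℝ) × (Fin n → ℝ) × ℝ) :=
  {p | (∀ j, 0 ≤ p.1 j ∧ p.1 j ≤ 1) ∧ (∀ j, 0 ≤ p.2.1 j ∧ p.2.1 j ≤ 1) ∧
       (0 ≤ p.2.2 ∧ p.2.2 ≤ 1) ∧
       (∀ j, p.1 j - (1 - p.2.1 j) ≤ p.2.2) ∧
       (∀ j, p.2.2 ≤ (∑ k, p.1 k) + (1 - p.2.1 j))}

def zeroOnePoints (n : ℕ) : Set ((Fin n → ℝ) × (Fin n → ℝ) × ℝ) :=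
  {p ∈ polytope n | (∀ j, p.1 j = 0 ∨ p.1 j = 1) ∧ (∀ j, p.2.1 j = 0 ∨ p.2.1 j = 1) ∧
               (p.2.2 = 0 ∨ p.2.2 = 1)}

theorem convex_polytope (n : ℕ) : Convex ℝ (polytope n) := by
  rintro p ⟨hp1, hp2, hp3, hp4, hp5⟩ q ⟨hq1, hq2, hq3, hq4, hq5⟩ a b ha hb hab
  simp only [polytope, mem_ofPred_eq, Prod.fst_add, Prod.snd_add, Prod.smul_fst,
    Prod.smul_snd, Pi.add_apply, Pi.smul_apply, smul_eq_mul, Finset.sum_add_distrib,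
    ← Finset.mul_sum]
  refine ⟨fun j => ⟨?_, ?_⟩, fun j => ⟨?_, ?_⟩, ⟨?_, ?_⟩, fun j => ?_, fun j => ?_⟩
  · nlinarith [(hp1 j).1, (hq1 j).1]
  · nlinarith [(hp1 j).2, (hq1 j).2]
  · nlinarith [(hp2 j).1, (hq2 j).1]
  · nlinarith [(hp2 j).2, (hq2 j).2]
  · nlinarith [hp3.1, hq3.1]
  · nlinarith [hp3.2, hq3.2]
  · nlinarith [mul_le_mul_of_nonneg_left (hp4 j) ha, mul_le_mul_of_nonneg_left (hq4 j) hb]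
  · nlinarith [mul_le_mul_of_nonneg_left (hp5 j) ha, mul_le_mul_of_nonneg_left (hq5 j) hb]

theorem finite_zeroOnePoints (n : ℕ) : (zeroOnePoints n).Finite := by
  have h01 : ({0, 1} : Set ℝ).Finite := toFinite _
  refine ((Finite.pi fun _ => h01).prod ((Finite.pi fun _ => h01).prod h01)).subset ?_
  rintro ⟨A, y, B⟩ ⟨-, hA, hy, hB⟩
  exact ⟨fun j _ => hA j, fun j _ => hy j, hB⟩

variable {n : ℕ} (A y : Fin n → ℝ) (B : ℝ)

noncomputable section

def level : ℝ := min B (∑ k, A k)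

def inputStart (j : Fin n) : ℝ := min (partialSum A j.castSucc) (max (B - A j) 0)

def inputWindow (j : Fin n) : Set ℝ := Ico (inputStart A B j) (inputStart A B j + A j)

def slackWindow (j : Fin n) : Set ℝ :=
  Ico (min (level A B) (y j)) (min (level A B) (y j) + (1 - y j))

def rounding (t : ℝ) : (Fin n → ℝ) × (Fin n → ℝ) × ℝ :=
  (fun j => (inputWindow A B j).indicator 1 t,
   fun j => 1 - (slackWindow A y B j).indicator 1 t,
   (Ico 0 B).indicator 1 t)

end

variable {A y B}

theorem inputWindow_subset_Ico_max (hA : 0 ≤ A) (j : Fin n) :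
    inputWindow A B j ⊆ Ico 0 (max (A j) B) := by
  refine Ico_subset_Ico (le_min (Fin.partialSum_nonneg hA _) (le_max_right _ _)) ?_
  calc inputStart A B j + A j ≤ max (B - A j) 0 + A j := by gcongr; exact min_le_right _ _
    _ = max (A j) B := by rw [max_add, sub_add_cancel, zero_add, max_comm]

theorem Ico_level_subset_iUnion_inputWindow :
    Ico 0 (level A B) ⊆ ⋃ j, inputWindow A B j := by
  rintro t ⟨ht0, htS⟩
  have htB : t < B := htS.trans_le (min_le_left _ _)
  have htA : t < partialSum A (Fin.last n) :=
    (Fin.partialSum_last A).symm ▸ htS.trans_le (min_le_right _ _)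
  obtain ⟨j, hjt, htj⟩ := Fin.exists_mem_Ico_partialSum A ht0 htA
  rw [Fin.partialSum_succ] at htj
  refine mem_iUnion.2 ⟨j, (min_le_left _ _).trans hjt, ?_⟩
  show t < inputStart A B j + A j
  rw [inputStart, ← min_add_add_right]
  exact lt_min htj (by linarith [le_max_left (B - A j) 0])

theorem max_le_level_add (hp : (A, y, B) ∈ polytope n) (j : Fin n) :
    max (A j) B ≤ level A B + (1 - y j) := by
  obtain ⟨hA, hy, -, hlo, hhi⟩ := hp
  rw [level, ← min_add_add_right]
  refine max_le (le_min (by linarith [hlo j]) ?_) (le_min (by linarith [(hy j).2]) (hhi j))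
  have : A j ≤ ∑ k, A k := Finset.single_le_sum (fun k _ => (hA k).1) (Finset.mem_univ j)
  linarith [(hy j).2]

theorem Ico_level_subset_slackWindow (hp : (A, y, B) ∈ polytope n) (j : Fin n) :
    Ico (level A B) (max (A j) B) ⊆ slackWindow A y B j := by
  refine Ico_subset_Ico (min_le_left _ _) ?_
  rw [← min_add_add_right, add_sub_cancel]
  exact le_min (max_le_level_add hp j) (max_le (hp.1 j).2 hp.2.2.1.2)

theorem inputWindow_subset_union_slackWindow (hp : (A, y, B) ∈ polytope n) (j : Fin n) :
    inputWindow A B j ⊆ Ico 0 B ∪ slackWindow A y B j := by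
  intro t ht
  obtain ⟨ht0, htj⟩ := inputWindow_subset_Ico_max (fun k => (hp.1 k).1) j ht
  by_cases htS : t < level A B
  · exact Or.inl ⟨ht0, htS.trans_le (min_le_left _ _)⟩
  · exact Or.inr (Ico_level_subset_slackWindow hp j ⟨not_lt.1 htS, htj⟩)

theorem Ico_subset_iUnion_union_slackWindow (hp : (A, y, B) ∈ polytope n) (j : Fin n) :
    Ico 0 B ⊆ (⋃ i, inputWindow A B i) ∪ slackWindow A y B j := by
  rintro t ⟨ht0, htB⟩
  by_cases htS : t < level A B
  · exact Or.inl (Ico_level_subset_iUnion_inputWindow ⟨ht0, htS⟩)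
  · exact Or.inr
      (Ico_level_subset_slackWindow hp j ⟨not_lt.1 htS, htB.trans_le (le_max_right _ _)⟩)

theorem inputWindow_subset_Ico (hp : (A, y, B) ∈ polytope n) (j : Fin n) :
    inputWindow A B j ⊆ Ico 0 1 :=
  (inputWindow_subset_Ico_max (fun k => (hp.1 k).1) j).trans
    (Ico_subset_Ico_right (max_le (hp.1 j).2 hp.2.2.1.2))

theorem slackWindow_subset_Ico (hp : (A, y, B) ∈ polytope n) (j : Fin n) :
    slackWindow A y B j ⊆ Ico 0 1 := by
  obtain ⟨hA, hy, hB, -⟩ := hp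
  have hlevel : 0 ≤ level A B := le_min hB.1 (Finset.sum_nonneg fun k _ => (hA k).1)
  refine Ico_subset_Ico (le_min hlevel (hy j).1) ?_
  rw [← min_add_add_right, add_sub_cancel]
  exact min_le_right _ _

theorem rounding_mem_zeroOnePoints (hp : (A, y, B) ∈ polytope n) (t : ℝ) :
    rounding A y B t ∈ zeroOnePoints n := by
  have h01 (s : Set ℝ) : s.indicator 1 t = (0 : ℝ) ∨ s.indicator 1 t = (1 : ℝ) := by
    simpa using s.indicator_eq_zero_or_self (1 : ℝ → ℝ) t
  have hbd (s : Set ℝ) : (0 : ℝ) ≤ s.indicator 1 t ∧ s.indicator 1 t ≤ (1 : ℝ) := by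
    rcases h01 s with h | h <;> simp [h]
  refine ⟨⟨fun j => hbd _, fun j => ?_, hbd _, fun j => ?_, fun j => ?_⟩,
    fun j => h01 _, fun j => ?_, h01 _⟩
  · simp only [rounding]
    constructor <;> linarith [hbd (slackWindow A y B j)]
  · simp only [rounding, sub_sub_cancel, tsub_le_iff_right]
    exact indicator_one_le_add_of_subset_union (inputWindow_subset_union_slackWindow hp j) t
  · simp only [rounding, sub_sub_cancel]
    calc (Ico 0 B).indicator 1 t
        ≤ (⋃ i, inputWindow A B i).indicator 1 t + (slackWindow A y B j).indicator 1 t :=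
          indicator_one_le_add_of_subset_union (Ico_subset_iUnion_union_slackWindow hp j) t
      _ ≤ ∑ i, (inputWindow A B i).indicator 1 t + (slackWindow A y B j).indicator 1 t := by
          gcongr; exact indicator_one_iUnion_le_sum _ t
  · rcases h01 (slackWindow A y B j) with h | h <;> simp only [rounding, h] <;> norm_num

theorem volume_real_inputWindow {j : Fin n} (hA : 0 ≤ A j) :
    volume.real (inputWindow A B j) = A j := by
  rw [inputWindow, Real.volume_real_Ico_of_le (le_add_of_nonneg_right hA), add_sub_cancel_left]

theorem volume_real_slackWindow {j : Fin n} (hy : y j ≤ 1) :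
    volume.real (slackWindow A y B j) = 1 - y j := by
  rw [slackWindow, Real.volume_real_Ico_of_le (le_add_of_nonneg_right (sub_nonneg.2 hy)),
    add_sub_cancel_left]

theorem integrable_rounding : Integrable (rounding A y B) (volume.restrict (Ico 0 1)) := by
  have hind (s : Set ℝ) (hs : MeasurableSet s) :
      Integrable (s.indicator (1 : ℝ → ℝ)) (volume.restrict (Ico 0 1)) :=
    (integrable_const 1).indicator hs
  exact (Integrable.of_eval fun j => hind _ measurableSet_Ico).prodMk
    ((Integrable.of_eval fun j => (integrable_const 1).sub (hind _ measurableSet_Ico)).prodMk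
      (hind _ measurableSet_Ico))

theorem setIntegral_rounding (hp : (A, y, B) ∈ polytope n) :
    ∫ t in Ico 0 1, rounding A y B t = (A, y, B) := by
  have hint := integrable_rounding (A := A) (y := y) (B := B)
  refine Prod.ext (funext fun j => ?_) (Prod.ext (funext fun j => ?_) ?_)
  · rw [fst_integral hint, eval_integral hint.fst.eval]
    simp only [rounding]
    rw [setIntegral_indicator_one_of_subset (s := inputWindow A B j) measurableSet_Ico
        (inputWindow_subset_Ico hp j),
      volume_real_inputWindow (hp.1 j).1]
  · rw [snd_integral hint, fst_integral hint.snd, eval_integral hint.snd.fst.eval]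
    simp only [rounding]
    rw [integral_sub (integrable_const 1) ((integrable_const 1).indicator measurableSet_Ico),
      setIntegral_indicator_one_of_subset (s := slackWindow A y B j) measurableSet_Ico
        (slackWindow_subset_Ico hp j),
      volume_real_slackWindow (hp.2.1 j).2]
    simp
  · rw [snd_integral hint, snd_integral hint.snd]
    simp only [rounding]
    rw [setIntegral_indicator_one_of_subset measurableSet_Ico
      (Ico_subset_Ico_right hp.2.2.1.2), Real.volume_real_Ico_of_le hp.2.2.1.1, sub_zero]

theorem mem_convexHull_of_mem_polytope {p : (Fin n → ℝ) × (Fin n → ℝ) × ℝ}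
    (hp : p ∈ polytope n) : p ∈ convexHull ℝ (zeroOnePoints n) := by
  obtain ⟨A, y, B⟩ := p
  rw [← setIntegral_rounding hp]
  exact (convex_convexHull ℝ _).integral_mem
    ((finite_zeroOnePoints n).isClosed_convexHull (𝕜 := ℝ))
    (.of_forall fun t => subset_convexHull ℝ _ (rounding_mem_zeroOnePoints hp t))
    integrable_rounding

theorem polytope_eq_convexHull (n : ℕ) : polytope n = convexHull ℝ (zeroOnePoints n) :=
  Subset.antisymm (fun _ => mem_convexHull_of_mem_polytope)
    (convexHull_min (fun _ hp => hp.1) (convex_polytope n))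

end MonotonizedClause

theorem monotonized_polytope_integral_general (n : ℕ) :
    let P : Set ((Fin n → ℝ) × (Fin n → ℝ) × ℝ) :=
      {p | (∀ j, 0 ≤ p.1 j ∧ p.1 j ≤ 1) ∧ (∀ j, 0 ≤ p.2.1 j ∧ p.2.1 j ≤ 1) ∧
           (0 ≤ p.2.2 ∧ p.2.2 ≤ 1) ∧
           (∀ j, p.1 j - (1 - p.2.1 j) ≤ p.2.2) ∧
           (∀ j, p.2.2 ≤ (∑ k, p.1 k) + (1 - p.2.1 j))}
    P = convexHull ℝ
      {p ∈ P | (∀ j, p.1 j = 0 ∨ p.1 j = 1) ∧ (∀ j, p.2.1 j = 0 ∨ p.2.1 j = 1) ∧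
               (p.2.2 = 0 ∨ p.2.2 = 1)} :=
  MonotonizedClause.polytope_eq_convexHull n

/-- Integrality of the LP relaxation of the monotonized single-clause system:
the polytope `P_mon` given by `0 ≤ A_j, y_j, B ≤ 1`, `B ≥ A_j − (1 − y_j)` and
`B ≤ ∑_k A_k + (1 − y_j)` equals the convex hull of its 0/1 points. -/
theorem monotonized_polytope_integral (n : ℕ) (hn : 0 < n) :
    let P : Set ((Fin n → ℝ) × (Fin n → ℝ) × ℝ) :=
      {p | (∀ j, 0 ≤ p.1 j ∧ p.1 j ≤ 1) ∧ (∀ j, 0 ≤ p.2.1 j ∧ p.2.1 j ≤ 1) ∧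
           (0 ≤ p.2.2 ∧ p.2.2 ≤ 1) ∧
           (∀ j, p.1 j - (1 - p.2.1 j) ≤ p.2.2) ∧
           (∀ j, p.2.2 ≤ (∑ k, p.1 k) + (1 - p.2.1 j))}
    P = convexHull ℝ
      {p ∈ P | (∀ j, p.1 j = 0 ∨ p.1 j = 1) ∧ (∀ j, p.2.1 j = 0 ∨ p.2.1 j = 1) ∧
               (p.2.2 = 0 ∨ p.2.2 = 1)} :=
  monotonized_polytope_integral_general n
end

section
/- Let R ⊆ ℝ^8 be the polytope of vectors (x₁, x₂, x₃, x₄, y₁, y₂, y₃, y₄) satisfying x₁ − (1 − y₁) ≤ x₄, (1 − x₃) − (1 − y₃) ≤ x₄, x₁ + (1 − x₃) + (1 − y₁) ≥ x₄, x₁ + (1 − x₃) + (1 − y₃) ≥ x₄, x₂ − (1 − y₂) ≤ x₃, x₄ − (1 − y₄) ≤ x₃, x₂ + x₄ + (1 − y₂) ≥ x₃, x₂ + x₄ + (1 − y₄) ≥ x₃, and 0 ≤ xᵢ, yᵢ ≤ 1 for i = 1,…,4. Then the fractional point (1/2, 1, 1/2, 1/2, 1, 1/2, 1, 1) is an extreme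 point of R, and the integral point (0, 0, 1, 0, 1, 0, 1, 0) is also an extreme point of R. In particular the linear relaxation of a monotonized dynamic system with two or more clauses is not integral in general. -/
/-!
If a linear map `T` satisfies `T y ≤ b` on a set `A`, then in a proper convex combination of two
points of `A` with `T x = b` both endpoints also satisfy `T = b`. Hence a point of `A` is extreme
once the constraints tight at it have it as their only common solution in `A`. At the fractional
point, four clause inequalities and four upper bounds are tight and form a nonsingular system.
The integral point is a vertex of the unit cube, which contains the polytope.
-/

open Set

section TightConstraints

variable {𝕜 E F : Type*} [Field 𝕜] [PartialOrder 𝕜]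
  [AddCommGroup E] [Module 𝕜 E] [AddCommGroup F] [PartialOrder F] [IsOrderedAddMonoid F]
  [Module 𝕜 F] [PosSMulMono 𝕜 F]

theorem eq_of_le_of_le_of_mem_openSegment {u v w : F} (hu : u ≤ w) (hv : v ≤ w)
    (hw : w ∈ openSegment 𝕜 u v) : u = w := by
  obtain ⟨a, c, ha, hc, hac, hw⟩ := hw
  have hsum : a • (w - u) + c • (w - v) = 0 := by
    rw [smul_sub, smul_sub, sub_add_sub_comm, ← add_smul, hac, one_smul, hw, sub_self]
  have hu' : a • (w - u) = 0 := ((add_eq_zero_iff_of_nonneg (smul_nonneg ha.le (sub_nonneg.2 hu))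
    (smul_nonneg hc.le (sub_nonneg.2 hv))).1 hsum).1
  exact (sub_eq_zero.1 ((smul_eq_zero.1 hu').resolve_left ha.ne')).symm

theorem mem_extremePoints_of_tight_of_unique [IsOrderedRing 𝕜] {A : Set E} {x : E}
    (T : E →ₗ[𝕜] F) {b : F} (hA : ∀ y ∈ A, T y ≤ b) (hx : x ∈ A) (hTx : T x = b)
    (hunique : ∀ y ∈ A, T y = b → y = x) : x ∈ A.extremePoints 𝕜 := by
  refine mem_extremePoints_iff_left.2 ⟨hx, fun y hy z hz hxyz => hunique y hy ?_⟩
  refine eq_of_le_of_le_of_mem_openSegment (𝕜 := 𝕜) (hA y hy) (hA z hz) ?_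
  obtain ⟨a, c, ha, hc, hac, rfl⟩ := hxyz
  exact ⟨a, c, ha, hc, hac, by rw [← hTx, map_add, map_smul, map_smul]⟩

end TightConstraints

theorem mem_extremePoints_of_subset_Icc {ι : Type*} {A : Set (ι → ℝ)} {a b x : ι → ℝ}
    (hab : a ≤ b) (hA : A ⊆ Icc a b) (hx : x ∈ A) (hvert : ∀ i, x i = a i ∨ x i = b i) :
    x ∈ A.extremePoints ℝ := by
  refine inter_extremePoints_subset_extremePoints_of_subset hA ⟨hx, ?_⟩
  rw [← pi_univ_Icc, extremePoints_pi]
  intro i _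
  change x i ∈ extremePoints ℝ (Icc (a i) (b i))
  rw [extremePoints_Icc (hab i)]
  exact hvert i

/-- The LP relaxation of the monotonized dynamic system for the negative
feedback cycle (coordinates `(x₁, x₂, x₃, x₄, y₁, y₂, y₃, y₄)`) has the
fractional vertex `(1/2, 1, 1/2, 1/2, 1, 1/2, 1, 1)` and the integral vertex
`(0, 0, 1, 0, 1, 0, 1, 0)`; hence the relaxation of a monotonized dynamic
system with two or more clauses is not integral in general. -/
theorem monotonized_dynamic_lp_vertices :
    let R : Set (Fin 8 → ℝ) :=
      {x | x 0 - (1 - x 4) ≤ x 3 ∧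
           (1 - x 2) - (1 - x 6) ≤ x 3 ∧
           x 0 + (1 - x 2) + (1 - x 4) ≥ x 3 ∧
           x 0 + (1 - x 2) + (1 - x 6) ≥ x 3 ∧
           x 1 - (1 - x 5) ≤ x 2 ∧
           x 3 - (1 - x 7) ≤ x 2 ∧
           x 1 + x 3 + (1 - x 5) ≥ x 2 ∧
           x 1 + x 3 + (1 - x 7) ≥ x 2 ∧
           ∀ i, 0 ≤ x i ∧ x i ≤ 1}
    (![1/2, 1, 1/2, 1/2, 1, 1/2, 1, 1] : Fin 8 → ℝ) ∈ R.extremePoints ℝ ∧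
    (![0, 0, 1, 0, 1, 0, 1, 0] : Fin 8 → ℝ) ∈ R.extremePoints ℝ := by
  intro R
  constructor
  · -- rows: the clause inequalities 1, 2, 5, 6 and the bounds `x₂ ≤ 1`, `y₁ ≤ 1`, `y₃ ≤ 1`, `y₄ ≤ 1`
    let W : Matrix (Fin 8) (Fin 8) ℝ :=
      !![1, 0, 0, -1, 1, 0, 0, 0;
         0, 0, -1, -1, 0, 0, 1, 0;
         0, 1, -1, 0, 0, 1, 0, 0;
         0, 0, -1, 1, 0, 0, 0, 1;
         0, 1, 0, 0, 0, 0, 0, 0;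
         0, 0, 0, 0, 1, 0, 0, 0;
         0, 0, 0, 0, 0, 0, 1, 0;
         0, 0, 0, 0, 0, 0, 0, 1]
    refine mem_extremePoints_of_tight_of_unique W.mulVecLin (b := ![1, 0, 1, 1, 1, 1, 1, 1])
      ?_ ?_ ?_ ?_
    · rintro y ⟨h₁, h₂, -, -, h₅, h₆, -, -, hbox⟩ i
      fin_cases i <;> simp [W, Matrix.mulVec, dotProduct, Fin.sum_univ_eight] <;>
        linarith [hbox 1, hbox 4, hbox 6, hbox 7]
    · simp [R, Fin.forall_fin_succ]
      norm_num
    · ext i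
      fin_cases i <;> simp [W, Matrix.mulVec, dotProduct, Fin.sum_univ_eight]; norm_num
    · intro y _ hy
      have h := congrFun hy
      simp [W, Matrix.mulVec, dotProduct, Fin.sum_univ_eight, Fin.forall_fin_succ] at h
      ext i
      fin_cases i <;> simp <;> linarith
  · have hR_unitCube : R ⊆ Icc 0 1 := by
      rintro y ⟨-, -, -, -, -, -, -, -, hbox⟩
      exact ⟨fun i => (hbox i).1, fun i => (hbox i).2⟩
    refine mem_extremePoints_of_subset_Icc zero_le_one hR_unitCube ?_ ?_
    · simp [R, Fin.forall_fin_succ]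
    · intro i
      fin_cases i <;> simp
end
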